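/- The number of n×n matrices P over F_q with P² = P equals Σ_{j=0}^{n} γ_n / (γ_j · γ_{n-j}), where γ_m = |GL_m(F_q)| and γ_0 = 1. -/

import Mathlib

/-!
An idempotent endomorphism of `V = F_q^n` is the same as a pair `(U, W)` of complementary
subspaces (its range and kernel). The complements of a `j`-dimensional `U` are the kernels of the
retractions `V → U`, a coset of the `q^(j(n-j))` maps vanishing on `U`. Counting ordered bases, the
number of `j`-dimensional subspaces times `γ_j` is `∏_{i<j} (q^n - q^i)`, and
`γ_n = ∏_{i<j} (q^n - q^i) · q^(j(n-j)) · γ_{n-j}`.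
-/

/-- The order of `GL_m(F_q)`. -/
def gma (q m : ℕ) : ℕ := ∏ i ∈ Finset.range m, (q ^ m - q ^ i)

open Module Submodule Finset

lemma gma_pos {q : ℕ} (hq : 1 < q) (m : ℕ) : 0 < gma q m :=
  prod_pos fun _ hi => Nat.sub_pos_of_lt (Nat.pow_lt_pow_right hq (mem_range.1 hi))

lemma gma_eq_prod_mul (q : ℕ) {j n : ℕ} (hj : j ≤ n) :
    gma q n = (∏ i ∈ range j, (q ^ n - q ^ i)) * (q ^ (j * (n - j)) * gma q (n - j)) := by
  have hfactor (i : ℕ) : q ^ n - q ^ (j + i) = q ^ j * (q ^ (n - j) - q ^ i) := by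
    rw [Nat.mul_sub, ← pow_add, ← pow_add, Nat.add_sub_cancel' hj]
  rw [gma, gma, ← prod_range_mul_prod_Ico _ hj, prod_Ico_eq_prod_range]
  simp only [hfactor, prod_mul_distrib, prod_const, card_range, ← pow_mul]

section Idempotent

variable {R E : Type*} [Ring R] [AddCommGroup E] [Module R E]

noncomputable def Module.End.isIdempotentElemEquivSigmaIsCompl :
    {f : Module.End R E // IsIdempotentElem f} ≃ Σ p : Submodule R E, {q // IsCompl p q} :=
  (Equiv.sigmaFiberEquiv fun f : {f : Module.End R E // IsIdempotentElem f} =>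
    LinearMap.range f.1).symm.trans <| Equiv.sigmaCongrRight fun p => (Equiv.subtypeSubtypeEquivSubtypeInter _ _).trans <|
      p.isIdempotentElemEquiv.trans p.isComplEquivProj.symm

end Idempotent

def Matrix.isIdempotentElemEquivEnd (K n : Type*) [CommSemiring K] [Fintype n] [DecidableEq n] :
    {P : Matrix n n K // IsIdempotentElem P} ≃ {f : Module.End K (n → K) // IsIdempotentElem f} :=
  Matrix.toLinAlgEquiv'.toEquiv.subtypeEquiv fun P => by
    simp only [IsIdempotentElem, AlgEquiv.toEquiv_eq_coe, EquivLike.coe_coe, ← map_mul,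
      EmbeddingLike.apply_eq_iff_eq]

section FiniteField

variable {K V : Type*} [Field K] [Fintype K] [AddCommGroup V] [Module K V] [FiniteDimensional K V]

theorem Submodule.natCard_isCompl (p : Submodule K V) :
    Nat.card {q // IsCompl p q} =
      Fintype.card K ^ (finrank K p * (finrank K V - finrank K p)) := by
  let ρ : (V →ₗ[K] p) →ₗ[K] (p →ₗ[K] p) := LinearMap.lcomp K p p.subtype
  have hρ : LinearMap.range ρ = ⊤ := LinearMap.range_eq_top.2 fun f => LinearMap.exists_extend f
  obtain ⟨f₀, hf₀⟩ := LinearMap.range_eq_top.1 hρ LinearMap.id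
  have hfiber : {f : V →ₗ[K] p // ∀ x : p, f x = x} ≃ LinearMap.ker ρ :=
    (Equiv.subtypeEquivRight fun f => by simp [ρ, hf₀, LinearMap.ext_iff]).trans
      (ρ.toAddMonoidHom.fiberEquivKer f₀)
  have hdim := LinearMap.finrank_range_add_finrank_ker ρ
  rw [hρ, finrank_top, finrank_linearMap, finrank_linearMap] at hdim
  rw [Nat.card_congr (p.isComplEquivProj.trans hfiber), natCard_eq_pow_finrank (K := K),
    Nat.card_eq_fintype_card, Nat.mul_sub, mul_comm (finrank K p)]
  congr 1
  omega

def Submodule.linearIndependentSpanEqEquiv {k : ℕ} (p : Submodule K V) (hp : finrank K p = k) :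
    {s : {s : Fin k → V // LinearIndependent K s} // span K (Set.range s.1) = p} ≃
      {t : Fin k → p // LinearIndependent K t} where
  toFun s := ⟨fun i => ⟨s.1.1 i, s.2.le (subset_span (Set.mem_range_self i))⟩,
    .of_comp p.subtype s.1.2⟩
  invFun t := ⟨⟨p.subtype ∘ t.1, t.2.map' p.subtype p.ker_subtype⟩, by
    rw [Set.range_comp, span_image,
      t.2.span_eq_top_of_card_eq_finrank' (by rw [Fintype.card_fin, hp]), Submodule.map_top,
      range_subtype]⟩
  left_inv _ := rfl
  right_inv _ := rfl

theorem Submodule.natCard_finrank_eq_mul_gma {k : ℕ} (hk : k ≤ finrank K V) :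
    Nat.card {p : Submodule K V // finrank K p = k} * gma (Fintype.card K) k =
      ∏ i ∈ range k, (Fintype.card K ^ finrank K V - Fintype.card K ^ i) := by
  have : Finite V := Module.finite_of_finite K
  let spanOf (s : {s : Fin k → V // LinearIndependent K s}) :
      {p : Submodule K V // finrank K p = k} :=
    ⟨span K (Set.range s.1), by rw [finrank_span_eq_card s.2, Fintype.card_fin]⟩
  have hfiber (p : {p : Submodule K V // finrank K p = k}) :
      Nat.card {s // spanOf s = p} = gma (Fintype.card K) k := by
    rw [Nat.card_congr ((Equiv.subtypeEquivRight fun s => Subtype.ext_iff).trans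
      (linearIndependentSpanEqEquiv p.1 p.2)), card_linearIndependent p.2.ge, p.2, gma,
      Fin.prod_univ_eq_prod_range (fun i => Fintype.card K ^ k - Fintype.card K ^ i)]
  have := Fintype.ofFinite {p : Submodule K V // finrank K p = k}
  rw [← Fin.prod_univ_eq_prod_range, ← card_linearIndependent hk,
    ← Nat.card_congr (Equiv.sigmaFiberEquiv spanOf), Nat.card_sigma]
  simp only [hfiber, sum_const, card_univ, smul_eq_mul, Nat.card_eq_fintype_card]

theorem Module.End.natCard_isIdempotentElem :
    Nat.card {f : Module.End K V // IsIdempotentElem f} =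
      ∑ j ∈ range (finrank K V + 1), Nat.card {p : Submodule K V // finrank K p = j} *
        Fintype.card K ^ (j * (finrank K V - j)) := by
  classical
  have : Finite V := Module.finite_of_finite K
  have := Fintype.ofFinite (Submodule K V)
  have hrange (p : Submodule K V) (_ : p ∈ univ) : finrank K p ∈ range (finrank K V + 1) :=
    mem_range.2 (Nat.lt_succ_of_le p.finrank_le)
  rw [Nat.card_congr isIdempotentElemEquivSigmaIsCompl, Nat.card_sigma,
    ← sum_fiberwise_of_maps_to hrange]
  refine sum_congr rfl fun j _ => ?_
  rw [Nat.card_eq_fintype_card, Fintype.card_subtype, ← smul_eq_mul, ← sum_const]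
  exact sum_congr rfl fun p hp => by rw [natCard_isCompl, (mem_filter.1 hp).2]

theorem natCard_finrank_eq_mul_pow_eq_gma_div {k : ℕ} (hk : k ≤ finrank K V) :
    (Nat.card {p : Submodule K V // finrank K p = k} *
        Fintype.card K ^ (k * (finrank K V - k)) : ℚ) =
      gma (Fintype.card K) (finrank K V) /
        (gma (Fintype.card K) k * gma (Fintype.card K) (finrank K V - k)) := by
  have hq : 1 < Fintype.card K := Fintype.one_lt_card
  have hcount : (Nat.card {p : Submodule K V // finrank K p = k} * gma (Fintype.card K) k : ℚ) =
      ((∏ i ∈ range k, (Fintype.card K ^ finrank K V - Fintype.card K ^ i) : ℕ) : ℚ) := by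
    exact_mod_cast natCard_finrank_eq_mul_gma hk
  rw [eq_div_iff (by positivity [gma_pos hq k, gma_pos hq (finrank K V - k)]),
    gma_eq_prod_mul _ hk, Nat.cast_mul, ← hcount]
  push_cast
  ring

end FiniteField

theorem card_projections_general (q n : ℕ)
    (F : Type) [Field F] [Fintype F] (hF : Fintype.card F = q) :
    (Nat.card {P : Matrix (Fin n) (Fin n) F // P * P = P} : ℚ) =
      ∑ j ∈ Finset.range (n + 1), (gma q n : ℚ) / (gma q j * gma q (n - j)) := by
  subst hF
  change (Nat.card {P : Matrix (Fin n) (Fin n) F // IsIdempotentElem P} : ℚ) = _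
  rw [Nat.card_congr (Matrix.isIdempotentElemEquivEnd F (Fin n)),
    Module.End.natCard_isIdempotentElem, finrank_fin_fun]
  push_cast
  refine sum_congr rfl fun j hj => ?_
  simpa only [finrank_fin_fun] using natCard_finrank_eq_mul_pow_eq_gma_div
    (K := F) (V := Fin n → F) (k := j) (by simpa [Nat.lt_succ_iff] using hj)

/-- The number of `n × n` idempotent matrices (projections) over `F_q` equals
`Σ_{j=0}^{n} γ_n / (γ_j γ_{n-j})`. -/
theorem card_projections (q n : ℕ) (hn : 0 < n)
    (F : Type) [Field F] [Fintype F] (hF : Fintype.card F = q) :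
    (Nat.card {P : Matrix (Fin n) (Fin n) F // P * P = P} : ℚ) =
      ∑ j ∈ Finset.range (n + 1), (gma q n : ℚ) / (gma q j * gma q (n - j)) :=
  card_projections_general q n F hF
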